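/- Let L be a first-order language with no function or constant symbols and finitely many relation symbols, and let K be a Ramsey class of finite L-structures (closed under isomorphism and induced substructures, with the joint embedding property, satisfying the Ramsey property for colorings of embeddings). Then every structure in K is rigid: for each A ∈ K, the only L-automorphism of A is the identity. -/

import Mathlib

/-!
Colour an embedding `f : A ↪ C` true iff it is a fixed chosen representative of its orbit
`{f ∘ τ | τ ∈ Aut A}`. Every `g ∘ τ` has the same range as `g`, so a monochromatic `g` for the
pair `(A, A)` makes its whole orbit one colour; the orbit contains its representative, so that
colour is true, and then every `g ∘ τ` equals the representative. Thus `g ∘ e = g`, and `e = id`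
because `g` is injective.
-/

open FirstOrder FirstOrder.Language CategoryTheory

universe u v w

def IsRamseyClass {L : FirstOrder.Language.{u, v}} (K : Set (Bundled.{w} L.Structure)) : Prop :=
  ∀ A ∈ K, ∀ B ∈ K, ∃ C ∈ K, ∀ c : (A ↪[L] C) → Bool,
    ∃ g : B ↪[L] C, ∀ f₁ f₂ : A ↪[L] C,
      Set.range ⇑f₁ ⊆ Set.range ⇑g → Set.range ⇑f₂ ⊆ Set.range ⇑g → c f₁ = c f₂

namespace FirstOrder.Language.Embedding

variable {L : Language} {M N : Type*} [L.Structure M] [L.Structure N]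

variable (L M N) in
def autOrbitSetoid : Setoid (M ↪[L] N) where
  r f f' := ∃ τ : M ≃[L] M, f' = f.comp τ.toEmbedding
  iseqv :=
    { refl := fun f => ⟨.refl L M, by rw [Equiv.refl_toEmbedding, comp_refl]⟩
      symm := by
        rintro f _ ⟨τ, rfl⟩
        exact ⟨τ.symm, by rw [comp_assoc, ← Equiv.comp_toEmbedding, Equiv.self_comp_symm,
          Equiv.refl_toEmbedding, comp_refl]⟩
      trans := by
        rintro f _ _ ⟨τ, rfl⟩ ⟨τ', rfl⟩
        exact ⟨τ.comp τ', by rw [comp_assoc, Equiv.comp_toEmbedding]⟩ }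

open Classical in
noncomputable def isOrbitRep (f : M ↪[L] N) : Bool :=
  decide (f = (Quotient.mk (autOrbitSetoid L M N) f).out)

theorem isOrbitRep_eq_true_iff (f : M ↪[L] N) :
    isOrbitRep f = true ↔ f = (Quotient.mk (autOrbitSetoid L M N) f).out := by
  classical
  exact decide_eq_true_iff

theorem range_comp_equiv (f : M ↪[L] N) (τ : M ≃[L] M) :
    Set.range (f.comp τ.toEmbedding) = Set.range f :=
  τ.toEquiv.surjective.range_comp f

theorem comp_equiv_eq_self_of_isOrbitRep_const (g : M ↪[L] N)
    (hg : ∀ τ : M ≃[L] M, isOrbitRep (g.comp τ.toEmbedding) = isOrbitRep g)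
    (τ : M ≃[L] M) : g.comp τ.toEmbedding = g := by
  set s := autOrbitSetoid L M N
  have hclass : ∀ σ : M ≃[L] M, Quotient.mk s (g.comp σ.toEmbedding) = Quotient.mk s g :=
    fun σ => (Quotient.sound (show g ≈ g.comp σ.toEmbedding from ⟨σ, rfl⟩)).symm
  have hrep_of_true : ∀ σ : M ≃[L] M, isOrbitRep g = true →
      g.comp σ.toEmbedding = (Quotient.mk s g).out := by
    intro σ h
    rwa [← hg σ, isOrbitRep_eq_true_iff, hclass σ] at h
  obtain ⟨σ₀, hσ₀⟩ : ∃ σ₀ : M ≃[L] M, (Quotient.mk s g).out = g.comp σ₀.toEmbedding :=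
    Setoid.symm (Quotient.mk_out (s := s) g)
  have htrue : isOrbitRep g = true := by
    rw [← hg σ₀, isOrbitRep_eq_true_iff, hclass σ₀, hσ₀]
  have hid := hrep_of_true (.refl L M) htrue
  rw [Equiv.refl_toEmbedding, comp_refl] at hid
  rw [hrep_of_true τ htrue, ← hid]

end FirstOrder.Language.Embedding

theorem stmt15_general {L : FirstOrder.Language.{u, v}}
    (K : Set (Bundled.{w} L.Structure))
    (hRamsey : IsRamseyClass K) :
    ∀ A ∈ K, ∀ e : A ≃[L] A, ∀ x : A, e x = x := by
  intro A hA e x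
  obtain ⟨C, -, hC⟩ := hRamsey A hA A hA
  obtain ⟨g, hg⟩ := hC Embedding.isOrbitRep
  have hmono : ∀ τ : A ≃[L] A, (g.comp τ.toEmbedding).isOrbitRep = g.isOrbitRep := fun τ =>
    hg _ _ (g.range_comp_equiv τ).le le_rfl
  apply g.injective
  simpa using DFunLike.congr_fun (g.comp_equiv_eq_self_of_isOrbitRep_const hmono e) x

/-- Every structure in a Ramsey class of finite structures over a finite
relational language (closed under isomorphism and induced substructures, with the joint
embedding property) is rigid. -/
theorem stmt15 {L : FirstOrder.Language.{u, v}} [L.IsRelational]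
    [Finite (Σ n, L.Relations n)]
    (K : Set (Bundled.{w} L.Structure))
    (hiso : ∀ M N : Bundled.{w} L.Structure, Nonempty (M ≃[L] N) → (M ∈ K ↔ N ∈ K))
    (hher : FirstOrder.Language.Hereditary K)
    (hjep : FirstOrder.Language.JointEmbedding K)
    (hfin : ∀ A ∈ K, Finite A)
    (hRamsey : IsRamseyClass K) :
    ∀ A ∈ K, ∀ e : A ≃[L] A, ∀ x : A, e x = x :=
  stmt15_general K hRamsey
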